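/- arXiv:2010.10464 — 3 statements merged into one kernel-verified Lean document; each statement's English description precedes it below -/
import Mathlib

section
/- For the Maddah-Ali & Niesen placement with parameters K and t, assume ε ≥ 1, 2 ≤ t ≤ K − 1, 2ε ≤ t, and C(K−1, t−1) ≥ 2ε + 1. Then the optimal codelength is exactly ℓ*(X,ε) = 2ε(K − t) + 1. -/
open Matrix Finset

/-- `H` is a valid encoder for the `(X, ε)` cache update problem: for every node `k`
there is a decoder `D_k` recovering `(w+e)|_{X_k}` from the codeword `H(w+e)` and the
side information `w|_{X_k}`, for all `w` and all updates `e` of Hamming weight at most `ε`. -/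
def ValidEncoder {𝓕 𝓚 : Type} [Fintype 𝓕] (F : Type) [Field F] [Fintype F]
    (X : 𝓚 → Finset 𝓕) (ε : ℕ) {l : ℕ} (H : Matrix (Fin l) 𝓕 F) : Prop :=
  ∀ k : 𝓚, ∃ D : (Fin l → F) → ({f // f ∈ X k} → F) → ({f // f ∈ X k} → F),
    ∀ w e : 𝓕 → F, {f | e f ≠ 0}.ncard ≤ ε →
      D (H.mulVec (w + e)) (fun f => w f.1) = fun f => (w + e) f.1

/-- The optimal codelength `ℓ*(X, ε)`: the least `l` for which some finite field `F`
admits a valid encoder `H ∈ F^{l×F}` for the `(X, ε)` cache update problem. -/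
noncomputable def optLen {𝓕 𝓚 : Type} [Fintype 𝓕] (X : 𝓚 → Finset 𝓕) (ε : ℕ) : ℕ :=
  sInf {l : ℕ | ∃ (F : Type) (inst1 : Field F) (inst2 : Fintype F)
    (H : Matrix (Fin l) 𝓕 F), @ValidEncoder 𝓕 𝓚 _ F inst1 inst2 X ε l H}

/-!
Node `k` can decode exactly when every kernel vector of `H` with at most `2ε` nonzero entries
inside `X k` vanishes on `X k`: two updates of weight `ε` that node `k` cannot tell apart (same
syndrome, same side information) differ by such a vector.

Lower bound: group the subfiles by their largest element. Taking `2ε` subfiles with largest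
element `k` for every `k ≥ t`, together with `{0, …, t - 1}`, gives `2ε(K - t) + 1` columns of
`H` that are linearly independent: a kernel vector supported on them vanishes level by level,
from the top, using at level `k` the kernel condition of node `k`.

Upper bound: let column `f` be the coefficient vector of `∏_{j ∉ f} ∏_{s < 2ε} (x - α j s)`, of
degree `2ε(K - t)`. A kernel vector is a vanishing combination of these polynomials, and
evaluating it at the points `α k s` leaves a `2ε × 2ε` system on the subfiles containing `k`.
With `α j s = θ ^ (2 ^ j + 2 ^ K * s)` the determinants of these systems are the values at `θ`
of polynomials over `𝔽₂` that are nonzero, because in each of them a single permutation attains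
the top degree (rearrangement inequality). A `θ` in a large enough finite field of
characteristic `2` avoids all their roots.
-/

open Polynomial

lemma exists_add_eq_of_ncard_support_le {ι M : Type*} [Finite ι] [AddMonoid M] {u : ι → M}
    {a b : ℕ} (hu : u.support.ncard ≤ a + b) :
    ∃ e₁ e₂ : ι → M, e₁ + e₂ = u ∧ e₁.support.ncard ≤ a ∧ e₂.support.ncard ≤ b := by
  obtain ⟨S, hS, hcard⟩ := Set.exists_subset_card_eq (min_le_right a u.support.ncard)
  refine ⟨S.indicator u, Sᶜ.indicator u, S.indicator_self_add_compl u, ?_, ?_⟩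
  · calc (S.indicator u).support.ncard ≤ S.ncard :=
          Set.ncard_le_ncard Set.support_indicator_subset (Set.toFinite _)
      _ ≤ a := hcard ▸ min_le_left _ _
  · rw [Set.support_indicator, Set.inter_comm, ← Set.sdiff_eq, Set.ncard_sdiff hS]
    omega

lemma ncard_support_sub_le {ι M : Type*} [Finite ι] [AddGroup M] (e e' : ι → M) :
    (e - e').support.ncard ≤ e.support.ncard + e'.support.ncard :=
  (Set.ncard_le_ncard (Function.support_sub e e') (Set.toFinite _)).trans
    (Set.ncard_union_le _ _)

def LocalKernelCondition {𝓕 𝓚 : Type} [Fintype 𝓕] (F : Type) [Field F]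
    (X : 𝓚 → Finset 𝓕) (ε : ℕ) {l : ℕ} (H : Matrix (Fin l) 𝓕 F) : Prop :=
  ∀ k v, H *ᵥ v = 0 → (v.support ∩ X k).ncard ≤ 2 * ε → ∀ f ∈ X k, v f = 0

theorem ValidEncoder.localKernelCondition {𝓕 𝓚 : Type} [Fintype 𝓕] {F : Type} [Field F]
    [Fintype F] {X : 𝓚 → Finset 𝓕} {ε l : ℕ} {H : Matrix (Fin l) 𝓕 F}
    (hV : ValidEncoder F X ε H) : LocalKernelCondition F X ε H := by
  intro k v hv hsmall f hf
  obtain ⟨D, hD⟩ := hV k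
  set u := (↑(X k) : Set 𝓕).indicator v with hu
  obtain ⟨e₁, e₂, hsplit, he₁, he₂⟩ := exists_add_eq_of_ncard_support_le (a := ε) (b := ε)
    (u := u) (by rwa [hu, Set.support_indicator, Set.inter_comm, ← two_mul])
  -- The updates `e₁` of `v - u` and `-e₂` of `0` look the same to node `k`.
  have hsyndrome : H *ᵥ (v - u + e₁) = H *ᵥ (0 + -e₂) := by
    rw [← hsplit]
    simp only [mulVec_add, mulVec_sub, mulVec_neg, hv, zero_add]
    abel
  have hside : (fun g : X k => (v - u) g.1) = fun g => (0 : 𝓕 → F) g.1 := by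
    ext ⟨g, hg⟩
    simp [hu, Set.indicator_of_mem (Finset.mem_coe.2 hg)]
  have hdecode := congrFun ((hD _ _ he₁).symm.trans ((congrArg₂ D hsyndrome hside).trans
    (hD 0 (-e₂) (by rwa [← Function.support_neg] at he₂)))) ⟨f, hf⟩
  rw [← hsplit] at hdecode
  simp only [Pi.add_apply, Pi.sub_apply, Pi.neg_apply, Pi.zero_apply, zero_add] at hdecode
  linear_combination hdecode

theorem LocalKernelCondition.validEncoder {𝓕 𝓚 : Type} [Fintype 𝓕] {F : Type} [Field F]
    [Fintype F] {X : 𝓚 → Finset 𝓕} {ε l : ℕ} {H : Matrix (Fin l) 𝓕 F}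
    (hK : LocalKernelCondition F X ε H) : ValidEncoder F X ε H := by
  intro k
  let enc : {p : (𝓕 → F) × (𝓕 → F) // p.2.support.ncard ≤ ε} → (Fin l → F) × (X k → F) :=
    fun p => (H *ᵥ (p.1.1 + p.1.2), fun f => p.1.1 f)
  let dec : {p : (𝓕 → F) × (𝓕 → F) // p.2.support.ncard ≤ ε} → (X k → F) :=
    fun p f => (p.1.1 + p.1.2) f
  have hfactor : dec.FactorsThrough enc := by
    rintro ⟨⟨w, e⟩, he⟩ ⟨⟨w', e'⟩, he'⟩ h
    simp only [enc, Prod.mk.injEq] at h he he'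
    funext ⟨f, hf⟩
    have hker : H *ᵥ ((w + e) - (w' + e')) = 0 := by rw [mulVec_sub, h.1, sub_self]
    refine sub_eq_zero.1 (hK k _ hker ?_ f hf)
    calc (((w + e) - (w' + e')).support ∩ X k).ncard ≤ (e - e').support.ncard := by
          refine Set.ncard_le_ncard (fun g ⟨hg, hgX⟩ => ?_) (Set.toFinite _)
          have hwg : w g = w' g := congrFun h.2 ⟨g, hgX⟩
          simpa [hwg, add_sub_add_left_eq_sub] using hg
      _ ≤ 2 * ε := by have := ncard_support_sub_le e e'; omega
  exact ⟨fun y s => Function.extend enc dec 0 (y, s),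
    fun w e he => hfactor.extend_apply 0 ⟨(w, e), he⟩⟩

lemma Matrix.card_le_of_ker_supported_eq_zero {𝓕 F : Type*} [Fintype 𝓕] [Field F] {l : ℕ}
    (H : Matrix (Fin l) 𝓕 F) (W : Finset 𝓕)
    (hW : ∀ v, H *ᵥ v = 0 → (∀ f ∉ W, v f = 0) → v = 0) : #W ≤ l := by
  let L := H.mulVecLin ∘ₗ Function.ExtendByZero.linearMap F ((↑) : W → 𝓕)
  have hL : Function.Injective L := by
    refine (injective_iff_map_eq_zero L).2 fun c hc => ?_
    have hext := hW _ hc fun f hf => Function.extend_apply' _ _ _ fun ⟨i, hi⟩ => hf (hi ▸ i.2)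
    funext i
    simpa using congrFun hext i
  simpa using LinearMap.finrank_le_finrank_of_injective hL

theorem LocalKernelCondition.eq_zero_of_supported {𝓕 𝓚 F : Type} [Fintype 𝓕] [Finite 𝓚]
    [LinearOrder 𝓚] [Field F] {X : 𝓚 → Finset 𝓕} {ε l : ℕ} {H : Matrix (Fin l) 𝓕 F}
    (hH : LocalKernelCondition F X ε H) (κ : 𝓕 → 𝓚) (hκ : ∀ f, f ∈ X (κ f))
    (hκ_le : ∀ k f, f ∈ X k → k ≤ κ f) {W : Finset 𝓕} (hW : ∀ k, #{f ∈ W | κ f = k} ≤ 2 * ε)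
    {v : 𝓕 → F} (hv : H *ᵥ v = 0) (hvW : ∀ f ∉ W, v f = 0) : v = 0 := by
  -- Downward induction on the level: at node `k`, the entries of `v` in `X k` that are not yet
  -- known to vanish belong to subfiles of `W` at level `k`.
  suffices ∀ k f, κ f = k → v f = 0 from funext fun f => this _ f rfl
  intro k
  induction k using WellFoundedGT.induction with
  | _ k ih =>
    intro f hf
    refine hH k v hv ?_ f (hf ▸ hκ f)
    calc (v.support ∩ X k).ncard ≤ (↑{g ∈ W | κ g = k} : Set 𝓕).ncard := by
          refine Set.ncard_le_ncard (fun g ⟨hg, hgX⟩ => ?_) (Set.toFinite _)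
          have hgW : g ∈ W := by_contra fun h => hg (hvW g h)
          have hκg : κ g = k := ((hκ_le k g hgX).lt_or_eq.resolve_left
            fun hlt => hg (ih _ hlt g rfl)).symm
          simp [hgW, hκg]
      _ ≤ 2 * ε := by rw [Set.ncard_coe_finset]; exact hW k

theorem LocalKernelCondition.sum_min_card_fiber_le {𝓕 𝓚 F : Type} [Fintype 𝓕] [Fintype 𝓚]
    [LinearOrder 𝓚] [Field F] {X : 𝓚 → Finset 𝓕} {ε l : ℕ} {H : Matrix (Fin l) 𝓕 F}
    (hH : LocalKernelCondition F X ε H) (κ : 𝓕 → 𝓚) (hκ : ∀ f, f ∈ X (κ f))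
    (hκ_le : ∀ k f, f ∈ X k → k ≤ κ f) : ∑ k, min (2 * ε) #{f | κ f = k} ≤ l := by
  classical
  choose S hS hScard using fun k => exists_subset_card_eq (min_le_right (2 * ε) #{f | κ f = k})
  have hκS : ∀ k, ∀ f ∈ S k, κ f = k := fun k f hf => by simpa using hS k hf
  have hdisj : (↑(univ : Finset 𝓚) : Set 𝓚).PairwiseDisjoint S := fun k _ k' _ hkk' =>
    disjoint_left.2 fun f hf hf' => hkk' ((hκS k f hf).symm.trans (hκS k' f hf'))
  calc ∑ k, min (2 * ε) #{f | κ f = k} = #(univ.biUnion S) := by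
        rw [card_biUnion hdisj]; exact sum_congr rfl fun k _ => (hScard k).symm
    _ ≤ l := by
      refine H.card_le_of_ker_supported_eq_zero _ fun v hv hvW => hH.eq_zero_of_supported κ hκ hκ_le
        (fun k => ?_) hv hvW
      calc #{f ∈ univ.biUnion S | κ f = k} ≤ #(S k) := card_le_card fun f hf => by
            simp only [mem_filter, mem_biUnion, mem_univ, true_and] at hf
            obtain ⟨⟨k', hf'⟩, rfl⟩ := hf
            rwa [hκS k' f hf']
        _ ≤ 2 * ε := hScard k ▸ min_le_left _ _

lemma le_choose_pred {t N : ℕ} (ht : 1 ≤ t) (htN : t ≤ N) : t ≤ N.choose (t - 1) := calc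
  t = t.choose (t - 1) := by rw [Nat.choose_symm (by omega), Nat.choose_one_right]
  _ ≤ N.choose (t - 1) := Nat.choose_le_choose _ htN

lemma le_sum_min_choose {K t ε : ℕ} (hε : 1 ≤ ε) (het : 2 * ε ≤ t) (htK : t ≤ K) :
    2 * ε * (K - t) + 1 ≤ ∑ k : Fin K, min (2 * ε) ((k : ℕ).choose (t - 1)) := by
  rw [Fin.sum_univ_eq_sum_range (fun k => min (2 * ε) (k.choose (t - 1)))]
  induction K, htK using Nat.le_induction with
  | base =>
    calc 2 * ε * (t - t) + 1 = min (2 * ε) ((t - 1).choose (t - 1)) := by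
          rw [Nat.choose_self, Nat.sub_self, mul_zero, min_eq_right (by omega)]
      _ ≤ _ := single_le_sum (f := fun k => min (2 * ε) (k.choose (t - 1)))
          (fun _ _ => Nat.zero_le _) (mem_range.2 (by omega))
  | succ K hK ih =>
    rw [sum_range_succ, min_eq_left (het.trans (le_choose_pred (by omega) hK)),
      show K + 1 - t = K - t + 1 by omega]
    linarith

abbrev Subfile (K t : ℕ) : Type := {s : Finset (Fin K) // s.card = t}

abbrev mnPlacement (K t : ℕ) (k : Fin K) : Finset (Subfile K t) := {f | k ∈ f.1}

lemma choose_le_card_subfile {K t : ℕ} (ht : 1 ≤ t) (k : Fin K) {A : Finset (Fin K)}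
    (hkA : k ∉ A) : (#A).choose (t - 1) ≤ #{f : Subfile K t | k ∈ f.1 ∧ f.1 ⊆ insert k A} := by
  rw [← card_powersetCard]
  refine card_le_card_of_surjOn (fun f => f.1.erase k) fun s hs => ?_
  obtain ⟨hsA, hs⟩ := mem_powersetCard.1 hs
  have hks : k ∉ s := fun h => hkA (hsA h)
  refine ⟨⟨insert k s, by rw [card_insert_of_notMem hks, hs]; omega⟩, ?_, erase_insert hks⟩
  simpa using insert_subset_insert k hsA

theorem mnPlacement_length_ge {K t ε l : ℕ} {F : Type} [Field F]
    {H : Matrix (Fin l) (Subfile K t) F} (hH : LocalKernelCondition F (mnPlacement K t) ε H)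
    (hε : 1 ≤ ε) (het : 2 * ε ≤ t) (htK : t ≤ K) : 2 * ε * (K - t) + 1 ≤ l := by
  have ht : 0 < t := by omega
  let top : Subfile K t → Fin K := fun f => f.1.max' (card_pos.1 (by rw [f.2]; exact ht))
  have hfiber (k : Fin K) : (k : ℕ).choose (t - 1) ≤ #{f | top f = k} := by
    refine (Fin.card_Iio k ▸ choose_le_card_subfile ht k notMem_Iio_self).trans
      (card_le_card fun f hf => ?_)
    simp only [mem_filter, mem_univ, true_and] at hf ⊢
    refine le_antisymm (max'_le _ _ _ fun j hj => ?_) (le_max' _ _ hf.1)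
    rcases mem_insert.1 (hf.2 hj) with rfl | hj
    exacts [le_rfl, (mem_Iio.1 hj).le]
  calc 2 * ε * (K - t) + 1 ≤ ∑ k : Fin K, min (2 * ε) ((k : ℕ).choose (t - 1)) :=
        le_sum_min_choose hε het htK
    _ ≤ ∑ k, min (2 * ε) #{f | top f = k} :=
        sum_le_sum fun k _ => min_le_min_left _ (hfiber k)
    _ ≤ l := hH.sum_min_card_fiber_le top (fun f => by simpa using max'_mem _ _)
        fun k f hf => le_max' _ _ (by simpa using hf)

section PolynomialCode

variable {𝓕 𝓚 F : Type} [DecidableEq 𝓕] [Fintype 𝓚] [Field F] (X : 𝓚 → Finset 𝓕) {n : ℕ}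
  (α : 𝓚 → Fin n → F)

noncomputable def codePoly (f : 𝓕) : F[X] :=
  ∏ j with f ∉ X j, ∏ s, (Polynomial.X - C (α j s))

noncomputable def codeMatrix (l : ℕ) : Matrix (Fin l) 𝓕 F :=
  Matrix.of fun i f => (codePoly X α f).coeff i

lemma natDegree_codePoly (f : 𝓕) : (codePoly X α f).natDegree = #{j | f ∉ X j} * n := by
  rw [codePoly, natDegree_prod_of_monic _ _ fun j _ => monic_prod_of_monic _ _ fun s _ =>
    monic_X_sub_C _]
  simp

lemma eval_codePoly_eq_zero {f : 𝓕} {k : 𝓚} (hf : f ∉ X k) (s : Fin n) :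
    (codePoly X α f).eval (α k s) = 0 := by
  rw [codePoly, eval_prod]
  exact prod_eq_zero (mem_filter.2 ⟨mem_univ k, hf⟩) (by
    rw [eval_prod]; exact prod_eq_zero (mem_univ s) (by simp))

lemma sum_C_mul_codePoly_eq_zero [Fintype 𝓕] {l : ℕ} (hdeg : ∀ f, (codePoly X α f).natDegree < l)
    {v : 𝓕 → F} (hv : codeMatrix X α l *ᵥ v = 0) : ∑ f, C (v f) * codePoly X α f = 0 := by
  ext i
  rw [finsetSum_coeff, coeff_zero]
  simp only [coeff_C_mul]
  by_cases hi : i < l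
  · simpa [mulVec, dotProduct, codeMatrix, mul_comm] using congrFun hv ⟨i, hi⟩
  · exact sum_eq_zero fun f _ => by
      rw [coeff_eq_zero_of_natDegree_lt (by have := hdeg f; omega), mul_zero]

theorem localKernelCondition_codeMatrix [Fintype 𝓕] {ε l : ℕ} (α : 𝓚 → Fin (2 * ε) → F)
    (hdeg : ∀ f, (codePoly X α f).natDegree < l) (hcard : ∀ k, 2 * ε ≤ #(X k))
    (hdet : ∀ k (τ : Fin (2 * ε) ↪ 𝓕), (∀ i, τ i ∈ X k) →
      (Matrix.of fun s i => (codePoly X α (τ i)).eval (α k s)).det ≠ 0) :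
    LocalKernelCondition F X ε (codeMatrix X α l) := by
  classical
  intro k v hv hsmall f hf
  -- at the points of node `k`, only the columns of subfiles cached at `k` survive
  have hrel (s : Fin (2 * ε)) : ∑ g, v g * (codePoly X α g).eval (α k s) = 0 := by
    simpa [eval_finsetSum] using congrArg (eval (α k s)) (sum_C_mul_codePoly_eq_zero X α hdeg hv)
  have hS : #{g ∈ X k | v g ≠ 0} ≤ 2 * ε := by
    rw [← Set.ncard_coe_finset]
    convert hsmall using 2
    ext g
    simp [and_comm]
  obtain ⟨T, hST, hTX, hT⟩ := exists_subsuperset_card_eq (filter_subset _ _) hS (hcard k)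
  have hvT : ∀ g ∈ X k, g ∉ T → v g = 0 := fun g hg hgT =>
    by_contra fun h => hgT (hST (mem_filter.2 ⟨hg, h⟩))
  let e : Fin (2 * ε) ≃ T := (T.equivFinOfCardEq hT).symm
  let τ : Fin (2 * ε) ↪ 𝓕 := e.toEmbedding.trans (Function.Embedding.subtype _)
  have hM : (Matrix.of fun s i => (codePoly X α (τ i)).eval (α k s)) *ᵥ (v ∘ τ) = 0 := by
    funext s
    rw [Pi.zero_apply, ← hrel s]
    calc _ = ∑ g ∈ T, v g * (codePoly X α g).eval (α k s) := by
          rw [← sum_coe_sort T]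
          exact Fintype.sum_equiv e _ _ fun i => mul_comm _ _
      _ = _ := sum_subset (subset_univ T) fun g _ hgT => by
          by_cases hg : g ∈ X k
          · rw [hvT g hg hgT, zero_mul]
          · rw [eval_codePoly_eq_zero X α hg, mul_zero]
  have hvτ := eq_zero_of_mulVec_eq_zero (hdet k τ fun i => hTX (e i).2) hM
  by_cases hfT : f ∈ T
  · simpa [τ] using congrFun hvτ (e.symm ⟨f, hfT⟩)
  · exact hvT f hf hfT

end PolynomialCode

theorem Matrix.det_ne_zero_of_sum_natDegree_lt {n R : Type*} [Fintype n] [DecidableEq n]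
    [CommRing R] [IsDomain R] {P : Matrix n n R[X]} (hP : ∀ i j, P i j ≠ 0) (σ₀ : Equiv.Perm n)
    (hσ₀ : ∀ σ ≠ σ₀, ∑ i, (P (σ i) i).natDegree < ∑ i, (P (σ₀ i) i).natDegree) :
    P.det ≠ 0 := by
  have hprod (σ : Equiv.Perm n) : (∏ i, P (σ i) i).natDegree = ∑ i, (P (σ i) i).natDegree :=
    natDegree_prod _ _ fun i _ => hP _ _
  have hcoeff : P.det.coeff (∑ i, (P (σ₀ i) i).natDegree) =
      Equiv.Perm.sign σ₀ • ∏ i, (P (σ₀ i) i).leadingCoeff := by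
    rw [det_apply, finsetSum_coeff, sum_eq_single σ₀ (fun σ _ hσ => ?_) (by simp)]
    · rw [Units.smul_def, coeff_smul, ← hprod, coeff_natDegree, leadingCoeff_prod, Units.smul_def]
    · rw [Units.smul_def, coeff_smul, coeff_eq_zero_of_natDegree_lt (hprod σ ▸ hσ₀ σ hσ),
        smul_zero]
  intro hdet
  rw [hdet, coeff_zero] at hcoeff
  exact (smul_ne_zero_iff_ne _).2 (prod_ne_zero_iff.2 fun i _ => leadingCoeff_ne_zero.2 (hP _ _))
    hcoeff.symm

theorem exists_perm_forall_ne_sum_mul_lt {n : ℕ} {c μ : Fin n → ℕ} (hc : Function.Injective c)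
    (hμ : Function.Injective μ) :
    ∃ σ₀ : Equiv.Perm (Fin n), ∀ σ ≠ σ₀, ∑ i, c (σ i) * μ i < ∑ i, c (σ₀ i) * μ i := by
  have hμsort : StrictMono (μ ∘ Tuple.sort μ) :=
    (Tuple.monotone_sort μ).strictMono_of_injective (hμ.comp (Tuple.sort μ).injective)
  have hsorted (σ : Equiv.Perm (Fin n)) (h : Monovary μ (c ∘ σ)) :
      Monotone (c ∘ (σ * Tuple.sort μ)) :=
    hμsort.trans_monovary fun a b hab => not_lt.1 fun hlt => (h hlt).not_gt hab
  let σ₀ := Tuple.sort c * (Tuple.sort μ)⁻¹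
  have hσ₀ : Monovary μ (c ∘ σ₀) := by
    intro i j hij
    obtain ⟨a, rfl⟩ := (Tuple.sort μ).surjective i
    obtain ⟨b, rfl⟩ := (Tuple.sort μ).surjective j
    simp only [Function.comp_apply, σ₀, Equiv.Perm.coe_mul, Equiv.Perm.coe_inv,
      Equiv.symm_apply_apply] at hij ⊢
    exact Tuple.monotone_sort μ ((Tuple.monotone_sort c).reflect_lt hij).le
  refine ⟨σ₀, fun σ hσ => ?_⟩
  have hlt := (hσ₀.sum_smul_comp_perm_lt_sum_smul_iff (σ := σ₀⁻¹ * σ)).2 fun h => hσ <|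
    mul_right_cancel (b := Tuple.sort μ) <| Equiv.Perm.ext fun a => hc <| congrFun
      (Tuple.unique_monotone (hsorted σ (by simpa [Function.comp_def] using h)) (hsorted σ₀ hσ₀)) a
  simpa [smul_eq_mul, mul_comm] using hlt

theorem Matrix.det_ne_zero_of_natDegree_eq_add_mul {n : ℕ} {R : Type*} [CommRing R] [IsDomain R]
    {P : Matrix (Fin n) (Fin n) R[X]} (hP : ∀ s i, P s i ≠ 0) {a b c μ : Fin n → ℕ}
    (hc : Function.Injective c) (hμ : Function.Injective μ)
    (hdeg : ∀ s i, (P s i).natDegree = a s + b i + c s * μ i) : P.det ≠ 0 := by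
  obtain ⟨σ₀, hσ₀⟩ := exists_perm_forall_ne_sum_mul_lt hc hμ
  refine det_ne_zero_of_sum_natDegree_lt hP σ₀ fun σ hσ => ?_
  simp only [hdeg, sum_add_distrib, Equiv.sum_comp σ a, Equiv.sum_comp σ₀ a]
  linarith [hσ₀ σ hσ]

lemma Polynomial.natDegree_X_pow_sub_X_pow {R : Type*} [CommRing R] [Nontrivial R] {a b : ℕ}
    (h : a ≠ b) : ((X : R[X]) ^ a - X ^ b).natDegree = max a b := by
  rcases h.lt_or_gt with h | h
  · rw [natDegree_sub_eq_right_of_natDegree_lt (by simpa), natDegree_X_pow, max_eq_right h.le]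
  · rw [natDegree_sub_eq_left_of_natDegree_lt (by simpa), natDegree_X_pow, max_eq_left h.le]

lemma Polynomial.X_pow_sub_X_pow_ne_zero {R : Type*} [CommRing R] [Nontrivial R] {a b : ℕ}
    (h : a ≠ b) : (X : R[X]) ^ a - X ^ b ≠ 0 :=
  sub_ne_zero.2 fun heq => h (by simpa using congrArg natDegree heq)

lemma sum_ite_lt_eq {n : ℕ} (s : Fin n) (x y z : ℕ) :
    ∑ s' : Fin n, (if s' < s then x else if s' = s then y else z) =
      s * x + y + (n - 1 - s) * z := by
  have h1 : ({a | s ≤ a ∧ a = s} : Finset (Fin n)) = {s} := by ext; simp; omega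
  have h2 : ({a | s ≤ a ∧ ¬a = s} : Finset (Fin n)) = Ioi s := by ext; simp; omega
  simp [sum_ite, filter_filter, h1, h2, filter_gt_eq_Iio]
  ring

def kroneckerExp (K : ℕ) {n : ℕ} (j : Fin K) (s : Fin n) : ℕ := 2 ^ (j : ℕ) + 2 ^ K * s

lemma kroneckerExp_ne {K n : ℕ} {k j : Fin K} (hjk : j ≠ k) (s s' : Fin n) :
    kroneckerExp K k s ≠ kroneckerExp K j s' := by
  intro h
  have hmod := congrArg (· % 2 ^ K) h
  simp only [kroneckerExp, Nat.add_mul_mod_self_left,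
    Nat.mod_eq_of_lt (Nat.pow_lt_pow_right one_lt_two k.2),
    Nat.mod_eq_of_lt (Nat.pow_lt_pow_right one_lt_two j.2)] at hmod
  exact hjk (Fin.ext (Nat.pow_right_injective le_rfl hmod).symm)

lemma max_kroneckerExp {K n : ℕ} (k j : Fin K) (s s' : Fin n) :
    max (kroneckerExp K k s) (kroneckerExp K j s') = 2 ^ K * max (s : ℕ) s' +
      if s' < s then 2 ^ (k : ℕ)
      else if s' = s then max (2 ^ (k : ℕ)) (2 ^ (j : ℕ)) else 2 ^ (j : ℕ) := by
  have hk : 2 ^ (k : ℕ) < 2 ^ K := Nat.pow_lt_pow_right one_lt_two k.2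
  have hj : 2 ^ (j : ℕ) < 2 ^ K := Nat.pow_lt_pow_right one_lt_two j.2
  unfold kroneckerExp
  rcases lt_trichotomy s' s with h | rfl | h
  · have : 2 ^ K * (s' : ℕ) + 2 ^ K ≤ 2 ^ K * s := by
      rw [← mul_add_one]; exact Nat.mul_le_mul_left _ h
    rw [if_pos h, max_eq_left (by linarith [Nat.zero_le (2 ^ (k : ℕ))]),
      max_eq_left (Fin.le_def.1 h.le)]
    ring
  · rw [if_neg (lt_irrefl _), if_pos rfl, max_self, max_add_add_right]
    ring
  · have : 2 ^ K * (s : ℕ) + 2 ^ K ≤ 2 ^ K * s' := by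
      rw [← mul_add_one]; exact Nat.mul_le_mul_left _ h
    rw [if_neg h.not_gt, if_neg h.ne', max_eq_right (by linarith [Nat.zero_le (2 ^ (j : ℕ))]),
      max_eq_right (Fin.le_def.1 h.le)]
    ring

lemma sum_max_kroneckerExp {K n : ℕ} (k j : Fin K) (s : Fin n) :
    ∑ s' : Fin n, max (kroneckerExp K k s) (kroneckerExp K j s') =
      (2 ^ K * ∑ s' : Fin n, max (s : ℕ) s' + s * 2 ^ (k : ℕ)) + max (2 ^ (k : ℕ)) (2 ^ (j : ℕ)) +
        (n - 1 - s) * 2 ^ (j : ℕ) := by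
  simp only [max_kroneckerExp, sum_add_distrib, sum_ite_lt_eq, ← mul_sum]
  ring

noncomputable def diffProd (R : Type*) [CommRing R] {K n : ℕ} (k : Fin K) (s : Fin n)
    (A : Finset (Fin K)) : R[X] :=
  ∏ j ∈ A, ∏ s' : Fin n, (X ^ kroneckerExp K k s - X ^ kroneckerExp K j s')

section diffProd

variable {R : Type*} [CommRing R] [IsDomain R] {K n : ℕ} {k : Fin K} {A : Finset (Fin K)}

lemma diffProd_factor_ne_zero (hkA : k ∉ A) {j : Fin K} (hj : j ∈ A) (s s' : Fin n) :
    (X ^ kroneckerExp K k s - X ^ kroneckerExp K j s' : R[X]) ≠ 0 :=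
  X_pow_sub_X_pow_ne_zero (kroneckerExp_ne (ne_of_mem_of_not_mem hj hkA) s s')

lemma diffProd_ne_zero (hkA : k ∉ A) (s : Fin n) : diffProd R k s A ≠ 0 :=
  prod_ne_zero_iff.2 fun _ hj => prod_ne_zero_iff.2 fun s' _ => diffProd_factor_ne_zero hkA hj s s'

lemma natDegree_diffProd (hkA : k ∉ A) (s : Fin n) :
    (diffProd R k s A).natDegree =
      #A * (2 ^ K * ∑ s' : Fin n, max (s : ℕ) s' + s * 2 ^ (k : ℕ)) +
        ∑ j ∈ A, max (2 ^ (k : ℕ)) (2 ^ (j : ℕ)) + (n - 1 - s) * ∑ j ∈ A, 2 ^ (j : ℕ) := by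
  rw [diffProd, natDegree_prod _ _ fun j hj => prod_ne_zero_iff.2 fun s' _ =>
    diffProd_factor_ne_zero hkA hj s s']
  calc _ = ∑ j ∈ A, ((2 ^ K * ∑ s' : Fin n, max (s : ℕ) s' + s * 2 ^ (k : ℕ)) +
        max (2 ^ (k : ℕ)) (2 ^ (j : ℕ)) + (n - 1 - s) * 2 ^ (j : ℕ)) :=
        sum_congr rfl fun j hj => by
          rw [natDegree_prod _ _ fun s' _ => diffProd_factor_ne_zero hkA hj s s',
            ← sum_max_kroneckerExp k j s]
          exact sum_congr rfl fun s' _ =>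
            natDegree_X_pow_sub_X_pow (kroneckerExp_ne (ne_of_mem_of_not_mem hj hkA) s s')
    _ = _ := by simp only [sum_add_distrib, sum_const, smul_eq_mul, mul_sum, mul_add]

end diffProd

lemma sum_two_pow_injective {K : ℕ} :
    Function.Injective fun A : Finset (Fin K) => ∑ j ∈ A, 2 ^ (j : ℕ) := by
  intro A B h
  apply map_injective Fin.valEmbedding
  apply geomSum_injective le_rfl
  simpa using h

theorem det_diffProd_ne_zero {R : Type*} [CommRing R] [IsDomain R] {K n m : ℕ} (k : Fin K)
    {A : Fin n → Finset (Fin K)} (hA : Function.Injective A) (hkA : ∀ i, k ∉ A i)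
    (hcard : ∀ i, #(A i) = m) : (Matrix.of fun s i => diffProd R k s (A i)).det ≠ 0 :=
  det_ne_zero_of_natDegree_eq_add_mul (fun s i => diffProd_ne_zero (hkA i) s)
    (c := fun s : Fin n => n - 1 - s) (μ := fun i => ∑ j ∈ A i, 2 ^ (j : ℕ))
    (fun s s' h => Fin.ext (by have := s.2; have := s'.2; simp only at h; omega))
    (sum_two_pow_injective.comp hA)
    fun s i => by rw [of_apply, natDegree_diffProd (hkA i), hcard]

lemma exists_galoisField_aeval_ne_zero (p : ℕ) [Fact p.Prime] {P : (ZMod p)[X]} (hP : P ≠ 0) :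
    ∃ N, ∃ θ : GaloisField p N, aeval θ P ≠ 0 := by
  let N := P.natDegree + 1
  have hcard : (P.map (algebraMap (ZMod p) (GaloisField p N))).natDegree <
      Cardinal.mk (GaloisField p N) := by
    rw [natDegree_map, ← Nat.cast_card, GaloisField.card p N (Nat.succ_ne_zero _), Nat.cast_lt]
    exact (Nat.lt_succ_self _).trans (Nat.lt_pow_self (Fact.out : p.Prime).one_lt)
  obtain ⟨θ, hθ⟩ := exists_eval_ne_zero_of_natDegree_lt_card _ (Polynomial.map_ne_zero hP) hcard
  exact ⟨N, θ, by rwa [aeval_def, eval₂_eq_eval_map]⟩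

lemma det_eval_codePoly_kroneckerExp {𝓕 R F : Type} [DecidableEq 𝓕] [CommRing R] [Field F]
    [Algebra R F] {K n : ℕ} (X : Fin K → Finset 𝓕) (θ : F) (k : Fin K) (τ : Fin n → 𝓕) :
    (Matrix.of fun s i => (codePoly X (fun j (s : Fin n) => θ ^ kroneckerExp K j s) (τ i)).eval
      (θ ^ kroneckerExp K k s)).det =
      aeval θ (Matrix.of fun s i => diffProd R k s {j | τ i ∉ X j}).det := by
  rw [AlgHom.map_det]
  congr 1
  ext s i
  simp [codePoly, diffProd, eval_prod, map_prod]

lemma filter_notMem_mnPlacement {K t : ℕ} (f : Subfile K t) :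
    ({j | f ∉ mnPlacement K t j} : Finset (Fin K)) = f.1ᶜ := by
  ext
  simp

lemma le_card_mnPlacement {K t : ℕ} (ht : 1 ≤ t) (htK : t < K) (k : Fin K) :
    t ≤ #(mnPlacement K t k) := calc
  t ≤ (K - 1).choose (t - 1) := le_choose_pred ht (by omega)
  _ ≤ #{f : Subfile K t | k ∈ f.1 ∧ f.1 ⊆ insert k (univ.erase k)} := by
    simpa [card_erase_of_mem] using choose_le_card_subfile ht k (notMem_erase k univ)
  _ ≤ #(mnPlacement K t k) := card_le_card fun f hf => by simp_all

theorem mnPlacement_exists_validEncoder {K t ε : ℕ} (ht : 1 ≤ t) (het : 2 * ε ≤ t)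
    (htK : t < K) : ∃ (F : Type) (_ : Field F) (_ : Fintype F)
      (H : Matrix (Fin (2 * ε * (K - t) + 1)) (Subfile K t) F),
      ValidEncoder F (mnPlacement K t) ε H := by
  classical
  -- the minors that `localKernelCondition_codeMatrix` needs to be nonzero, as polynomials in `θ`
  let P : (ZMod 2)[X] := ∏ k : Fin K,
    ∏ τ : Fin (2 * ε) ↪ Subfile K t with ∀ i, τ i ∈ mnPlacement K t k,
    (Matrix.of fun s i => diffProd (ZMod 2) k s {j | τ i ∉ mnPlacement K t j}).det
  have hP : P ≠ 0 := prod_ne_zero_iff.2 fun k _ => prod_ne_zero_iff.2 fun τ hτ => by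
    simp only [filter_notMem_mnPlacement]
    exact det_diffProd_ne_zero k (fun i i' h => τ.injective (Subtype.ext (compl_injective h)))
      (fun i => by simpa using (mem_filter.1 hτ).2 i)
      (fun i => by rw [card_compl, Fintype.card_fin, (τ i).2])
  obtain ⟨N, θ, hθ⟩ := exists_galoisField_aeval_ne_zero 2 hP
  let _ : Fintype (GaloisField 2 N) := Fintype.ofFinite _
  let α : Fin K → Fin (2 * ε) → GaloisField 2 N := fun j s => θ ^ kroneckerExp K j s
  refine ⟨GaloisField 2 N, inferInstance, inferInstance, codeMatrix (mnPlacement K t) α _,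
    (localKernelCondition_codeMatrix _ α (fun f => ?_)
      (fun k => het.trans (le_card_mnPlacement ht htK k)) fun k τ hτ => ?_).validEncoder⟩
  · rw [natDegree_codePoly, filter_notMem_mnPlacement, card_compl, Fintype.card_fin, f.2,
      mul_comm]
    exact Nat.lt_succ_self _
  · rw [det_eval_codePoly_kroneckerExp (R := ZMod 2)]
    simp only [P, map_prod, prod_ne_zero_iff] at hθ
    exact hθ k (mem_univ k) τ (mem_filter.2 ⟨mem_univ τ, hτ⟩)

theorem MN_optLen_regime1_general (K t : ℕ) (htK : t ≤ K - 1)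
    (ε : ℕ) (hε : 1 ≤ ε) (het : 2 * ε ≤ t) :
    optLen (fun k : Fin K =>
        Finset.univ.filter (fun f : {s : Finset (Fin K) // s.card = t} => k ∈ f.1)) ε =
      2 * ε * (K - t) + 1 := by
  obtain ⟨F, _, _, H, hH⟩ := mnPlacement_exists_validEncoder (K := K) (by omega) het (by omega)
  refine le_antisymm (Nat.sInf_le ⟨F, _, _, H, hH⟩) (le_csInf ⟨_, F, _, _, H, hH⟩ ?_)
  rintro l ⟨F, _, _, H, hH⟩
  exact mnPlacement_length_ge hH.localKernelCondition hε het (by omega)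

/-- For the Maddah-Ali & Niesen placement with parameters `K, t`
(subfiles: `t`-subsets of `{1,…,K}`, nodes: `{1,…,K}`, `f ∈ X k ↔ k ∈ f`), assume
`ε ≥ 1`, `2 ≤ t ≤ K − 1`, `2ε ≤ t` and `C(K−1, t−1) ≥ 2ε + 1`. Then
`ℓ*(X, ε) = 2ε(K − t) + 1`. -/
theorem MN_optLen_regime1 (K t : ℕ) (ht2 : 2 ≤ t) (htK : t ≤ K - 1)
    (ε : ℕ) (hε : 1 ≤ ε) (het : 2 * ε ≤ t)
    (hZ : 2 * ε + 1 ≤ Nat.choose (K - 1) (t - 1)) :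
    optLen (fun k : Fin K =>
        Finset.univ.filter (fun f : {s : Finset (Fin K) // s.card = t} => k ∈ f.1)) ε =
      2 * ε * (K - t) + 1 :=
  MN_optLen_regime1_general K t htK ε hε het
end

section
/- For the Yan et al. / Tang & Ramamoorthy placement with integer parameters q, m ≥ 2, order the pairs (u,v) with u ∈ {1,…,m} and v ∈ Z_q by: (u′,v′) ≺ (u,v) if and only if v′ < v, or v′ = v and u′ < u. Then for every such pair (u,v), the number of subfile indices in X_{(u,v)} that do not belong to X_{(u′,v′)} for any (u′,v′) ≺ (u,v) equals (q − v − 1)^{u−1} · (q − v)^{m−u}, with the convention 0^0 = 1. -/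
/-!
A subfile `s` lies in `X_{(u',v')}` exactly when `s_{u'} = v'`, so `s` is new at `(u,v)` iff
`(v, u)` is the lexicographically least of the pairs `(s_j, j)`. That means `s_u = v`,
`s_j > v` for `j < u` and `s_j ≥ v` for `j > u`, so the new subfiles form a box with
`q - v - 1` choices in each of the first `u - 1` coordinates and `q - v` in each of the last `m - u`.
-/

open Matrix Finset

section LexMin

variable {ι α : Type*} [LinearOrder ι] [LinearOrder α]

theorem forall_ne_of_toLex_lt_iff (s : ι → α) (i : ι) (a : α) :
    (∀ j b, toLex (b, j) < toLex (a, i) → s j ≠ b) ↔ ∀ j, toLex (a, i) ≤ toLex (s j, j) :=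
  ⟨fun h j => not_lt.1 fun hlt => h j _ hlt rfl, fun h j _ hlt hb => (h j).not_gt (hb ▸ hlt)⟩

variable [Fintype ι]

theorem prod_ite_lt_ite_eq [LocallyFiniteOrderBot ι] [LocallyFiniteOrderTop ι]
    {M : Type*} [CommMonoid M] (i : ι) (x y : M) :
    ∏ j, (if j < i then x else if j = i then 1 else y) = x ^ #(Iio i) * y ^ #(Ioi i) := by
  rw [prod_ite, prod_const, filter_gt_eq_Iio, prod_ite, prod_const, one_pow, one_mul, prod_const]
  congr 3
  ext j
  simp only [mem_filter, mem_univ, true_and, mem_Ioi]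
  grind

variable [LocallyFiniteOrderTop α]

theorem setOf_forall_toLex_le_eq_piFinset (i : ι) (a : α) :
    {s : ι → α | s i = a ∧ ∀ j, toLex (a, i) ≤ toLex (s j, j)} =
      Fintype.piFinset fun j => if j < i then Ioi a else if j = i then {a} else Ici a := by
  ext s
  simp only [Set.mem_ofPred_eq, mem_coe, Fintype.mem_piFinset, Prod.Lex.toLex_le_toLex]
  constructor
  · rintro ⟨rfl, h⟩ j
    rcases lt_trichotomy j i with hji | rfl | hij
    · grind
    · simp
    · grind
  · intro h
    have hi : s i = a := by simpa using h i
    refine ⟨hi, fun j => ?_⟩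
    rcases lt_trichotomy j i with hji | rfl | hij
    · grind
    · simp [hi]
    · grind

theorem ncard_setOf_forall_toLex_le [LocallyFiniteOrderBot ι] [LocallyFiniteOrderTop ι]
    (i : ι) (a : α) :
    {s : ι → α | s i = a ∧ ∀ j, toLex (a, i) ≤ toLex (s j, j)}.ncard =
      #(Ioi a) ^ #(Iio i) * #(Ici a) ^ #(Ioi i) := by
  rw [setOf_forall_toLex_le_eq_piFinset, Set.ncard_coe_finset, Fintype.card_piFinset,
    ← prod_ite_lt_ite_eq]
  refine prod_congr rfl fun j _ => ?_
  split_ifs <;> simp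

end LexMin

/-- For the Yan et al. / Tang & Ramamoorthy placement with parameters
`q, m ≥ 2` (subfiles `Z_q^m`; for `1 ≤ u ≤ m`, `X_{(u,v)} = {s : s_u = v}`), order the
pairs `(u,v)` by `(u′,v′) ≺ (u,v) ↔ v′ < v ∨ (v′ = v ∧ u′ < u)`. The number of subfiles
in `X_{(u,v)}` not in any `X_{(u′,v′)}` with `(u′,v′) ≺ (u,v)` equals
`(q − v − 1)^{u−1} (q − v)^{m−u}` (with `0^0 = 1`). -/
theorem yan_tang_new_subfile_count (q m : ℕ)
    (u v : ℕ) (hu1 : 1 ≤ u) (hum : u ≤ m) (hv : v < q) :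
    {s : Fin m → Fin q | s ⟨u - 1, by omega⟩ = ⟨v, hv⟩ ∧
        ∀ u' v' : ℕ, ∀ _ : 1 ≤ u', ∀ _ : u' ≤ m, ∀ hv' : v' < q,
          (v' < v ∨ (v' = v ∧ u' < u)) →
            s ⟨u' - 1, by omega⟩ ≠ ⟨v', hv'⟩}.ncard =
      (q - v - 1) ^ (u - 1) * (q - v) ^ (m - u) := by
  set i : Fin m := ⟨u - 1, by omega⟩
  set a : Fin q := ⟨v, hv⟩
  have hprev : ∀ s : Fin m → Fin q,
      (∀ u' v' : ℕ, ∀ _ : 1 ≤ u', ∀ _ : u' ≤ m, ∀ hv' : v' < q,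
        (v' < v ∨ (v' = v ∧ u' < u)) → s ⟨u' - 1, by omega⟩ ≠ ⟨v', hv'⟩) ↔
      ∀ j b, toLex (b, j) < toLex (a, i) → s j ≠ b := by
    intro s
    simp only [Prod.Lex.toLex_lt_toLex, Fin.lt_def, Fin.ext_iff, i, a]
    refine ⟨fun h j b hlt => ?_, fun h u' v' hu' hum' hv' hlt => h _ ⟨v', hv'⟩ (by simp only; omega)⟩
    simpa using h (j + 1) b (by omega) j.isLt b.isLt (by omega)
  simp only [hprev, forall_ne_of_toLex_lt_iff]
  rw [ncard_setOf_forall_toLex_le, Fin.card_Iio, Fin.card_Ioi, Fin.card_Ioi, Fin.card_Ici]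
  simp only [i, a]
  congr 2 <;> omega
end

section
/- Consider the Yan et al. / Tang & Ramamoorthy placement with integer parameters q, m ≥ 2, and assume ε ≥ 1 and q^{m−1} ≥ 2ε + 1. For u ∈ {1,…,m} and v ∈ Z_q set x_{(u,v)} = (q − v − 1)^{u−1} (q − v)^{m−u} (with 0^0 = 1), and order these pairs by: (u′,v′) ≺ (u,v) iff v′ < v, or v′ = v and u′ < u. Let (u₀, v₀) be the first pair in this order with x_{(u₀,v₀)} < 2ε (such a pair exists since m ≥ 2). Then u₀ ≥ 2 and ℓ*(X,ε) ≥ 2ε · (v₀(m − 1) + u₀ + q − 2). -/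
/-!
A kernel vector `d` of a valid encoder with at most `2ε` nonzero entries on a cache `X k`
vanishes on `X k`: split those entries into two updates of weight `≤ ε`, which the decoder
at `k` would otherwise confuse. So if cells `C₁, …, C_T` are caches and each `Cᵢ` contains
`2ε` subfiles lying in no earlier cell, the columns of `H` at these `2εT` subfiles are linearly
independent (peel the cells off from the first one), and `l ≥ 2εT`.

For the placement take the coordinate nodes `(u, v) ≺ (u₀, v₀)`, followed by `(1, v)` for
`v₀ < v < q`, so `T = v₀ m + (u₀ - 1) + (q - 1 - v₀)`. The subfiles of node `(u, v)` whose
other coordinates avoid every earlier node form a box of size `x_(u,v)`; for the late nodes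
`(1, v)` a box of size `x_(u₀-1,v₀)` still avoids all earlier nodes. Both sizes are `≥ 2ε` by
the minimality of `(u₀, v₀)`.
-/

open Matrix Finset

lemma ncard_setOf_ne_zero_le_card {α M : Type*} [Zero M] {e : α → M} {A : Finset α}
    (he : ∀ a ∉ A, e a = 0) : {a | e a ≠ 0}.ncard ≤ #A := by
  rw [← Set.ncard_coe_finset]
  exact Set.ncard_le_ncard (fun a ha => by_contra fun h => ha (he a h)) A.finite_toSet

def KerTrivialOn {𝓕 F : Type} [Fintype 𝓕] [Field F] {l : ℕ} (H : Matrix (Fin l) 𝓕 F)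
    (U : Finset 𝓕) : Prop :=
  ∀ d : 𝓕 → F, (∀ f ∉ U, d f = 0) → H *ᵥ d = 0 → d = 0

section Encoder

variable {𝓕 𝓚 F : Type} [Fintype 𝓕] [Field F] {X : 𝓚 → Finset 𝓕} {ε l : ℕ}
  {H : Matrix (Fin l) 𝓕 F}

lemma KerTrivialOn.card_le {U : Finset 𝓕} (hU : KerTrivialOn H U) : #U ≤ l := by
  let Φ := H.mulVecLin ∘ₗ Function.ExtendByZero.linearMap F ((↑) : U → 𝓕)
  have hΦ : Function.Injective Φ := by
    refine (injective_iff_map_eq_zero Φ).2 fun x hx => ?_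
    have hext := hU (Function.extend (↑) x 0)
      (fun f hf => Function.extend_apply' _ _ _ fun ⟨g, hg⟩ => hf (hg ▸ g.2)) hx
    funext g
    simpa using congrFun hext g
  simpa using LinearMap.finrank_le_finrank_of_injective hΦ

variable [Fintype F]

lemma ValidEncoder.eqOn_of_mulVec_eq (hH : ValidEncoder F X ε H) (k : 𝓚) {w e w' e' : 𝓕 → F}
    (he : {f | e f ≠ 0}.ncard ≤ ε) (he' : {f | e' f ≠ 0}.ncard ≤ ε)
    (hw : ∀ f ∈ X k, w f = w' f) (hHw : H *ᵥ (w + e) = H *ᵥ (w' + e')) :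
    ∀ f ∈ X k, (w + e) f = (w' + e') f := by
  obtain ⟨D, hD⟩ := hH k
  have hside : (fun f : {f // f ∈ X k} => w f.1) = fun f => w' f.1 := funext fun f => hw f f.2
  have := (hD w e he).symm.trans (hHw ▸ hside ▸ hD w' e' he')
  exact fun f hf => congrFun this ⟨f, hf⟩

open scoped Classical in
lemma ValidEncoder.eqOn_zero_of_mulVec_eq_zero (hH : ValidEncoder F X ε H)
    (k : 𝓚) {d : 𝓕 → F} (hd : H *ᵥ d = 0) (hsupp : #{f ∈ X k | d f ≠ 0} ≤ 2 * ε) :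
    ∀ f ∈ X k, d f = 0 := by
  set S := {f ∈ X k | d f ≠ 0}
  obtain ⟨A, hAS, hA⟩ := Finset.exists_subset_card_eq (min_le_left #S ε)
  -- split the support of `d` on `X k` into two updates `e` and `-e'` of weight at most `ε`
  let e : 𝓕 → F := fun f => if f ∈ A then d f else 0
  let e' : 𝓕 → F := fun f => if f ∈ S \ A then -d f else 0
  have he : {f | e f ≠ 0}.ncard ≤ ε :=
    (ncard_setOf_ne_zero_le_card fun f hf => if_neg hf).trans (hA ▸ min_le_right _ _)
  have he' : {f | e' f ≠ 0}.ncard ≤ ε := by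
    refine (ncard_setOf_ne_zero_le_card fun f hf => if_neg hf).trans ?_
    rw [card_sdiff_of_subset hAS, hA]
    omega
  have hsplit : ∀ f ∈ X k, e f - d f - e' f = 0 := by
    intro f hf
    by_cases hdf : d f = 0
    · have hfA : f ∉ A := fun h => (mem_filter.1 (hAS h)).2 hdf
      simp [e, e', hfA, hdf]
    · by_cases hfA : f ∈ A <;> simp [e, e', S, hf, hdf, hfA]
  have key := hH.eqOn_of_mulVec_eq k he he' (w := 0) (w' := e - d - e')
    (fun f hf => (hsplit f hf).symm)
    (by rw [zero_add, sub_add_cancel, Matrix.mulVec_sub, hd, sub_zero])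
  intro f hf
  have := key f hf
  simp only [Pi.add_apply, Pi.sub_apply, Pi.zero_apply, zero_add, sub_add_cancel] at this
  linear_combination this

lemma KerTrivialOn.union [DecidableEq 𝓕] (hH : ValidEncoder F X ε H) {U Y C : Finset 𝓕}
    (hU : KerTrivialOn H U) (hC : C ∈ Set.range X) (hYC : Y ⊆ C) (hY : #Y ≤ 2 * ε)
    (hUC : Disjoint U C) : KerTrivialOn H (U ∪ Y) := by
  classical
  obtain ⟨k, rfl⟩ := hC
  intro d hdU hd
  have hsupp : {f ∈ X k | d f ≠ 0} ⊆ Y := fun f hf => by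
    obtain ⟨hfX, hdf⟩ := mem_filter.1 hf
    by_contra hfY
    exact hdf (hdU f (by simp [hfY, disjoint_right.1 hUC hfX]))
  have hzero := hH.eqOn_zero_of_mulVec_eq_zero k hd ((card_le_card hsupp).trans hY)
  refine hU d (fun f hf => ?_) hd
  by_cases hfY : f ∈ Y
  · exact hzero f (hYC hfY)
  · exact hdU f (by simp [hf, hfY])

lemma ValidEncoder.card_mul_le_of_chain (hH : ValidEncoder F X ε H)
    {κ : Type*} [LinearOrder κ] (S : Finset κ) (C G : κ → Finset 𝓕)
    (hC : ∀ i ∈ S, C i ∈ Set.range X) (hGC : ∀ i ∈ S, G i ⊆ C i) (hG : ∀ i ∈ S, 2 * ε ≤ #(G i))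
    (hfresh : ∀ i ∈ S, ∀ j ∈ S, i < j → Disjoint (G j) (C i)) :
    #S * (2 * ε) ≤ l := by
  classical
  suffices ∃ U ⊆ S.biUnion G, #U = #S * (2 * ε) ∧ KerTrivialOn H U by
    obtain ⟨U, -, hcard, hU⟩ := this
    exact hcard ▸ hU.card_le
  -- the cell added last is the earliest one, and it meets none of the sets already collected
  induction S using Finset.induction_on_min with
  | empty => exact ⟨∅, empty_subset _, by simp, fun d hd _ => funext fun f => hd f (notMem_empty f)⟩
  | insert a S haS ih =>
    obtain ⟨U, hUG, hcard, hU⟩ := ih (fun i hi => hC i (mem_insert_of_mem hi))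
      (fun i hi => hGC i (mem_insert_of_mem hi)) (fun i hi => hG i (mem_insert_of_mem hi))
      (fun i hi j hj => hfresh i (mem_insert_of_mem hi) j (mem_insert_of_mem hj))
    obtain ⟨Y, hYG, hY⟩ := exists_subset_card_eq (hG a (mem_insert_self a S))
    have hUC : Disjoint U (C a) := by
      refine disjoint_left.2 fun f hfU hfC => ?_
      obtain ⟨j, hj, hfj⟩ := mem_biUnion.1 (hUG hfU)
      exact disjoint_left.1 (hfresh a (mem_insert_self a S) j (mem_insert_of_mem hj) (haS j hj))
        hfj hfC
    have haS' : a ∉ S := fun h => lt_irrefl a (haS a h)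
    refine ⟨U ∪ Y, union_subset (hUG.trans (biUnion_subset_biUnion_of_subset_left _
      (subset_insert a S))) (hYG.trans (subset_biUnion_of_mem G (mem_insert_self a S))), ?_,
      hU.union hH (hC a (mem_insert_self a S)) (hYG.trans (hGC a (mem_insert_self a S)))
        hY.le hUC⟩
    rw [card_union_of_disjoint (disjoint_left.2 fun f hfU hfY =>
      disjoint_left.1 hUC hfU (hGC a (mem_insert_self a S) (hYG hfY))), hcard, hY,
      card_insert_of_notMem haS']
    ring

end Encoder

lemma validEncoder_one_submatrix {𝓕 𝓚 : Type} [Fintype 𝓕] [DecidableEq 𝓕] (F : Type) [Field F]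
    [Fintype F] (X : 𝓚 → Finset 𝓕) (ε : ℕ) :
    ValidEncoder F X ε ((1 : Matrix 𝓕 𝓕 F).submatrix (Fintype.equivFin 𝓕).symm id) := by
  refine fun k => ⟨fun c _ f => c (Fintype.equivFin 𝓕 f.1), fun w e _ => funext fun f => ?_⟩
  simp [Matrix.mulVec, dotProduct, Matrix.one_apply]

lemma le_optLen {𝓕 𝓚 : Type} [Fintype 𝓕] {X : 𝓚 → Finset 𝓕} {ε n : ℕ}
    (h : ∀ (F : Type) [Field F] [Fintype F] (l : ℕ) (H : Matrix (Fin l) 𝓕 F),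
      ValidEncoder F X ε H → n ≤ l) : n ≤ optLen X ε := by
  classical
  refine le_csInf ⟨_, ZMod 2, inferInstance, inferInstance, _,
    validEncoder_one_submatrix (ZMod 2) X ε⟩ ?_
  rintro l ⟨F, _, _, H, hH⟩
  exact h F l H hH

def yanTangPlacement (q m : ℕ) (k : Fin (m + 1) × Fin q) : Finset (Fin m → Fin q) :=
  if h : (k.1 : ℕ) < m then
    Finset.univ.filter (fun s : Fin m → Fin q => s ⟨k.1, h⟩ = k.2)
  else
    Finset.univ.filter (fun s : Fin m → Fin q => (∑ i, (s i : ℕ)) % q = (k.2 : ℕ))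

section YanTang

/-- A pair `n = (v, a)` stands for the coordinate node `(a + 1, v)`: value first, so that the
lexicographic order on pairs is the order `≺`. -/
def coordCell (q m : ℕ) (n : ℕ × ℕ) : Finset (Fin m → Fin q) :=
  {s | ∀ j : Fin m, (j : ℕ) = n.2 → (s j : ℕ) = n.1}

def lexBox (q m : ℕ) (n p : ℕ × ℕ) : Finset (Fin m → Fin q) :=
  Fintype.piFinset fun j =>
    {x | if (j : ℕ) = n.2 then (x : ℕ) = n.1 else toLex p ≤ toLex ((x : ℕ), (j : ℕ))}

def yanTangChain (q m v₀ b : ℕ) : Finset (ℕ × ℕ) :=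
  range v₀ ×ˢ range m ∪ {v₀} ×ˢ range b ∪ Ioo v₀ q ×ˢ {0}

/-- Every chain node lexicographically before `n` lies strictly below the floor of `n`. -/
def chainBox (q m v₀ b : ℕ) (n : ℕ × ℕ) : Finset (Fin m → Fin q) :=
  lexBox q m n (if n.1 ≤ v₀ then n else (v₀, b))

variable {q m v₀ b : ℕ}

lemma coordCell_mem_range {n : ℕ × ℕ} (h2 : n.2 < m) (h1 : n.1 < q) :
    coordCell q m n ∈ Set.range (yanTangPlacement q m) := by
  refine ⟨(⟨n.2, by omega⟩, ⟨n.1, h1⟩), ?_⟩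
  ext s
  simp only [yanTangPlacement, coordCell, h2, dif_pos, mem_filter, mem_univ, true_and, Fin.ext_iff]
  exact ⟨fun h j hj => by simpa [← hj] using h, fun h => h _ rfl⟩

lemma lexBox_subset_coordCell (n p : ℕ × ℕ) : lexBox q m n p ⊆ coordCell q m n := by
  intro s hs
  simp only [lexBox, Fintype.mem_piFinset, mem_filter, mem_univ, true_and] at hs
  simp only [coordCell, mem_filter, mem_univ, true_and]
  intro j hj
  simpa [hj] using hs j

lemma card_filter_le_val (c : ℕ) : #{x : Fin q | c ≤ (x : ℕ)} = q - c := by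
  have hlt := Fin.card_filter_val_lt (n := q) (m := c)
  have hsum := card_filter_add_card_filter_not (s := univ) fun x : Fin q => (x : ℕ) < c
  simp only [not_lt, card_univ, Fintype.card_fin] at hsum
  omega

lemma card_lexBox {n p : ℕ × ℕ} (h2 : n.2 < m) (h1 : n.1 < q) (hp : p.2 ≤ m) :
    #(lexBox q m n p) = (q - (p.1 + 1)) ^ #((range p.2).erase n.2) *
      (q - p.1) ^ #((Ico p.2 m).erase n.2) := by
  have hfactor (j : ℕ) : #{x : Fin q | if j = n.2 then (x : ℕ) = n.1 else
      toLex p ≤ toLex ((x : ℕ), j)} =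
        if j = n.2 then 1 else if j < p.2 then q - (p.1 + 1) else q - p.1 := by
    split_ifs with hj
    · rw [card_eq_one]
      exact ⟨⟨n.1, h1⟩, by ext x; simp [Fin.ext_iff]⟩
    all_goals
      rw [← card_filter_le_val]
      congr 1
      ext x
      simp only [Prod.Lex.toLex_le_toLex, mem_filter, mem_univ, true_and]
      omega
  rw [lexBox, Fintype.card_piFinset]
  simp only [hfactor]
  rw [Fin.prod_univ_eq_prod_range (fun j => if j = n.2 then 1 else
      if j < p.2 then q - (p.1 + 1) else q - p.1), ← mul_prod_erase _ _ (mem_range.2 h2),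
    if_pos rfl, one_mul, prod_congr rfl fun j hj => if_neg (ne_of_mem_erase hj), prod_ite,
    prod_const, prod_const, filter_erase, filter_erase]
  congr 3 <;> ext j <;> simp <;> omega

lemma card_lexBox_self {n : ℕ × ℕ} (h2 : n.2 < m) (h1 : n.1 < q) :
    #(lexBox q m n n) = (q - n.1 - 1) ^ n.2 * (q - n.1) ^ (m - (n.2 + 1)) := by
  rw [card_lexBox h2 h1 h2.le, erase_eq_of_notMem (by simp), card_erase_of_mem (by simp; omega)]
  simp [Nat.sub_sub]

lemma card_lexBox_zero {v w c : ℕ} (hv : v < q) (hc : 1 ≤ c) (hcm : c ≤ m) :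
    #(lexBox q m (v, 0) (w, c)) = (q - w - 1) ^ (c - 1) * (q - w) ^ (m - c) := by
  rw [card_lexBox (by simp; omega) hv hcm, card_erase_of_mem (by simp; omega),
    erase_eq_of_notMem (by simp; omega)]
  simp [Nat.sub_sub]

lemma mem_yanTangChain {n : ℕ × ℕ} : n ∈ yanTangChain q m v₀ b ↔
    n.1 < v₀ ∧ n.2 < m ∨ n.1 = v₀ ∧ n.2 < b ∨ v₀ < n.1 ∧ n.1 < q ∧ n.2 = 0 := by
  simp only [yanTangChain, mem_union, mem_product, mem_range, mem_singleton, mem_Ioo]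
  omega

lemma card_yanTangChain : #(yanTangChain q m v₀ b) = v₀ * m + b + (q - v₀ - 1) := by
  rw [yanTangChain, card_union_of_disjoint, card_union_of_disjoint]
  · simp
  all_goals
    rw [disjoint_left]
    simp only [mem_union, mem_product, mem_range, mem_singleton, mem_Ioo]
    omega

lemma disjoint_chainBox_coordCell (hbm : b < m) {n n' : ℕ × ℕ} (hn : n ∈ yanTangChain q m v₀ b)
    (hn' : n' ∈ yanTangChain q m v₀ b) (hlt : toLex n' < toLex n) :
    Disjoint (chainBox q m v₀ b n) (coordCell q m n') := by
  rw [mem_yanTangChain] at hn hn'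
  rw [Prod.Lex.toLex_lt_toLex] at hlt
  refine disjoint_left.2 fun s hs hs' => ?_
  have hj : n'.2 < m := by omega
  have hbox := Fintype.mem_piFinset.1 hs ⟨n'.2, hj⟩
  have hcell := (mem_filter.1 hs').2 ⟨n'.2, hj⟩ rfl
  simp only [mem_filter, mem_univ, true_and, Prod.Lex.toLex_le_toLex] at hbox
  split_ifs at hbox <;> omega

lemma le_card_chainBox {ε : ℕ} (hv₀ : v₀ < q) (hb : 1 ≤ b) (hbm : b < m)
    (hprev : ∀ u v : ℕ, 1 ≤ u → u ≤ m → v < q → (v < v₀ ∨ v = v₀ ∧ u < b + 1) →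
      2 * ε ≤ (q - v - 1) ^ (u - 1) * (q - v) ^ (m - u))
    {n : ℕ × ℕ} (hn : n ∈ yanTangChain q m v₀ b) : 2 * ε ≤ #(chainBox q m v₀ b n) := by
  rw [mem_yanTangChain] at hn
  obtain ⟨v, a⟩ := n
  rw [chainBox]
  split_ifs with hv
  · rw [card_lexBox_self (by omega) (by omega)]
    simpa using hprev (a + 1) v (by omega) (by omega) (by omega) (by omega)
  · obtain rfl : a = 0 := by omega
    rw [card_lexBox_zero (by omega) hb hbm.le]
    exact hprev b v₀ hb hbm.le (by omega) (by omega)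

lemma ValidEncoder.yanTang_chain_bound {ε l : ℕ} {F : Type} [Field F] [Fintype F]
    {H : Matrix (Fin l) (Fin m → Fin q) F} (hH : ValidEncoder F (yanTangPlacement q m) ε H)
    (hv₀ : v₀ < q) (hb : 1 ≤ b) (hbm : b < m)
    (hprev : ∀ u v : ℕ, 1 ≤ u → u ≤ m → v < q → (v < v₀ ∨ v = v₀ ∧ u < b + 1) →
      2 * ε ≤ (q - v - 1) ^ (u - 1) * (q - v) ^ (m - u)) :
    (v₀ * m + b + (q - v₀ - 1)) * (2 * ε) ≤ l := by
  have hchain := hH.card_mul_le_of_chain ((yanTangChain q m v₀ b).map toLex.toEmbedding)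
    (fun n => coordCell q m (ofLex n)) (fun n => chainBox q m v₀ b (ofLex n)) ?_ ?_ ?_ ?_
  · rwa [card_map, card_yanTangChain] at hchain
  all_goals simp only [mem_map_equiv, toLex_symm_eq]
  · intro n hn
    rw [mem_yanTangChain] at hn
    exact coordCell_mem_range (by omega) (by omega)
  · exact fun n _ => lexBox_subset_coordCell _ _
  · exact fun n hn => le_card_chainBox hv₀ hb hbm hprev hn
  · exact fun n' hn' n hn hlt => disjoint_chainBox_coordCell hbm hn hn' hlt

end YanTang

theorem yan_tang_lower_bound_general (q m : ℕ) (ε : ℕ)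
    (hZ : 2 * ε + 1 ≤ q ^ (m - 1))
    (u₀ v₀ : ℕ) (hu₀1 : 1 ≤ u₀) (hu₀m : u₀ ≤ m) (hv₀ : v₀ < q)
    (hfirst : (q - v₀ - 1) ^ (u₀ - 1) * (q - v₀) ^ (m - u₀) < 2 * ε)
    (hprev : ∀ u v : ℕ, 1 ≤ u → u ≤ m → v < q →
      (v < v₀ ∨ (v = v₀ ∧ u < u₀)) →
        2 * ε ≤ (q - v - 1) ^ (u - 1) * (q - v) ^ (m - u)) :
    2 ≤ u₀ ∧
      2 * ε * (v₀ * (m - 1) + u₀ + q - 2) ≤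
        optLen (fun k : Fin (m + 1) × Fin q =>
          if h : (k.1 : ℕ) < m then
            Finset.univ.filter (fun s : Fin m → Fin q => s ⟨k.1, h⟩ = k.2)
          else
            Finset.univ.filter
              (fun s : Fin m → Fin q => (∑ i, (s i : ℕ)) % q = (k.2 : ℕ))) ε := by
  -- `x_(1,v₀) = x_(m,v₀-1)`, and `x_(1,0) = q^(m-1) > 2ε`
  have hu₀ : 2 ≤ u₀ := by
    by_contra! hu₀
    obtain rfl : u₀ = 1 := by omega
    have hx : (q - v₀) ^ (m - 1) < 2 * ε := by simpa using hfirst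
    rcases Nat.eq_zero_or_pos v₀ with rfl | hv₀pos
    · rw [Nat.sub_zero] at hx
      omega
    · have := hprev m (v₀ - 1) (by omega) le_rfl (by omega) (Or.inl (by omega))
      rw [show q - (v₀ - 1) - 1 = q - v₀ by omega, Nat.sub_self, pow_zero, mul_one] at this
      omega
  refine ⟨hu₀, ?_⟩
  obtain ⟨b, rfl⟩ : ∃ b, u₀ = b + 1 := ⟨u₀ - 1, by omega⟩
  have hlen : 2 * ε * (v₀ * (m - 1) + (b + 1) + q - 2) =
      (v₀ * m + b + (q - v₀ - 1)) * (2 * ε) := by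
    have : v₀ ≤ v₀ * m := Nat.le_mul_of_pos_right v₀ (by omega)
    rw [Nat.mul_sub_one, mul_comm]
    congr 1
    omega
  rw [hlen]
  exact le_optLen fun F _ _ l H hH => hH.yanTang_chain_bound hv₀ (by omega) (by omega) hprev

/-- For the Yan et al. / Tang & Ramamoorthy placement with parameters
`q, m ≥ 2` (subfiles `Z_q^m`; nodes `(u,v)`, `1 ≤ u ≤ m+1`, `v ∈ Z_q`, encoded below with
`u : Fin (m+1)` where `u < m` are the coordinate nodes and `u = m` the mod-`q`-sum nodes),
assume `ε ≥ 1` and `q^{m−1} ≥ 2ε + 1`. With `x_{(u,v)} = (q−v−1)^{u−1}(q−v)^{m−u}` and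
`(u₀, v₀)` the first pair in the order `≺` with `x_{(u₀,v₀)} < 2ε`, one has `u₀ ≥ 2` and
`ℓ*(X, ε) ≥ 2ε (v₀(m−1) + u₀ + q − 2)`. -/
theorem yan_tang_lower_bound (q m : ℕ) (hq : 2 ≤ q) (hm : 2 ≤ m) (ε : ℕ) (hε : 1 ≤ ε)
    (hZ : 2 * ε + 1 ≤ q ^ (m - 1))
    (u₀ v₀ : ℕ) (hu₀1 : 1 ≤ u₀) (hu₀m : u₀ ≤ m) (hv₀ : v₀ < q)
    (hfirst : (q - v₀ - 1) ^ (u₀ - 1) * (q - v₀) ^ (m - u₀) < 2 * ε)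
    (hprev : ∀ u v : ℕ, 1 ≤ u → u ≤ m → v < q →
      (v < v₀ ∨ (v = v₀ ∧ u < u₀)) →
        2 * ε ≤ (q - v - 1) ^ (u - 1) * (q - v) ^ (m - u)) :
    2 ≤ u₀ ∧
      2 * ε * (v₀ * (m - 1) + u₀ + q - 2) ≤
        optLen (fun k : Fin (m + 1) × Fin q =>
          if h : (k.1 : ℕ) < m then
            Finset.univ.filter (fun s : Fin m → Fin q => s ⟨k.1, h⟩ = k.2)
          else
            Finset.univ.filter
              (fun s : Fin m → Fin q => (∑ i, (s i : ℕ)) % q = (k.2 : ℕ))) ε :=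
  yan_tang_lower_bound_general q m ε hZ u₀ v₀ hu₀1 hu₀m hv₀ hfirst hprev
end
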